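/- Fix 0 < α < 1/2 with normal α-quantile z_α satisfying |z_α| > 1, let c ≥ 0 with |z_α| ≥ 2c, and 0 < ζ < 1. Let ρ* be the unique nonnegative solution of c·ρ + ln F_α(|z_α| + ρ) = ln(1-ζ). Then ρ* ≤ (-ln(1 - z_α^{-2}) - ln(1-ζ)) / (|z_α| - c). -/

import Mathlib

open MeasureTheory Real Filter Set

/-!
Since `t ↦ -t⁻¹ e^{-t²/2}` is an antiderivative of `(1 + t⁻²) e^{-t²/2}`, integrating over
`(x, ∞)` gives the two-sided Gaussian tail bound
`(1 - x⁻²) e^{-x²/2} / x ≤ ∫_x^∞ e^{-t²/2} dt ≤ e^{-x²/2} / x` for `x > 0`.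
Using the upper bound at `x + ρ` and the lower bound at `x = |z_α|`,
`ln F_α(x + ρ) ≤ -ln(1 - x⁻²) - xρ`, so the defining equation of `ρ*` forces
`(x - c) ρ* ≤ -ln(1 - x⁻²) - ln(1 - ζ)`.
-/

lemma integrable_exp_neg_sq_div_two : Integrable fun t : ℝ => exp (-t ^ 2 / 2) := by
  convert integrable_exp_neg_mul_sq (by norm_num : (0 : ℝ) < 1 / 2) using 2 with t
  ring_nf

lemma integral_Ioi_exp_neg_sq_div_two_pos (y : ℝ) : 0 < ∫ t in Ioi y, exp (-t ^ 2 / 2) :=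
  haveI : NeZero (volume.restrict (Ioi y)) := ⟨by simp⟩
  integral_exp_pos integrable_exp_neg_sq_div_two.integrableOn

lemma hasDerivAt_neg_inv_mul_exp_neg_sq_div_two {t : ℝ} (ht : t ≠ 0) :
    HasDerivAt (fun t : ℝ => -t⁻¹ * exp (-t ^ 2 / 2))
      ((1 + (t ^ 2)⁻¹) * exp (-t ^ 2 / 2)) t := by
  have hinv : HasDerivAt (fun t : ℝ => -t⁻¹) (t ^ 2)⁻¹ t := by
    simpa using (hasDerivAt_inv ht).fun_neg
  have hexp : HasDerivAt (fun t : ℝ => exp (-t ^ 2 / 2)) (exp (-t ^ 2 / 2) * -t) t := by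
    refine HasDerivAt.exp <| (((hasDerivAt_pow 2 t).fun_neg).div_const 2).congr_deriv ?_
    ring
  refine (hinv.fun_mul hexp).congr_deriv ?_
  field_simp
  ring

lemma integrableOn_inv_sq_mul_exp_neg_sq_div_two {x : ℝ} (hx : 0 < x) :
    IntegrableOn (fun t : ℝ => (t ^ 2)⁻¹ * exp (-t ^ 2 / 2)) (Ioi x) := by
  refine Integrable.mono' (integrable_exp_neg_sq_div_two.const_mul (x ^ 2)⁻¹).integrableOn ?_ ?_
  · refine ContinuousOn.aestronglyMeasurable ?_ measurableSet_Ioi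
    exact ((continuousOn_pow 2).inv₀ fun t ht => by positivity [hx.trans ht]).mul
      (by fun_prop)
  · filter_upwards [ae_restrict_mem measurableSet_Ioi] with t ht
    rw [norm_mul, norm_inv, norm_of_nonneg (by positivity), norm_of_nonneg (exp_pos _).le]
    gcongr
    exact ht.le

lemma integrableOn_one_add_inv_sq_mul_exp_neg_sq_div_two {x : ℝ} (hx : 0 < x) :
    IntegrableOn (fun t : ℝ => (1 + (t ^ 2)⁻¹) * exp (-t ^ 2 / 2)) (Ioi x) :=
  (integrable_exp_neg_sq_div_two.integrableOn.add
    (integrableOn_inv_sq_mul_exp_neg_sq_div_two hx)).congr_fun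
    (fun t _ => by simp only [Pi.add_apply]; ring) measurableSet_Ioi

lemma integral_Ioi_one_add_inv_sq_mul_exp_neg_sq_div_two {x : ℝ} (hx : 0 < x) :
    ∫ t in Ioi x, (1 + (t ^ 2)⁻¹) * exp (-t ^ 2 / 2) = exp (-x ^ 2 / 2) / x := by
  have hderiv : ∀ t ∈ Ici x, HasDerivAt (fun t : ℝ => -t⁻¹ * exp (-t ^ 2 / 2))
      ((1 + (t ^ 2)⁻¹) * exp (-t ^ 2 / 2)) t :=
    fun t ht => hasDerivAt_neg_inv_mul_exp_neg_sq_div_two (hx.trans_le ht).ne'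
  have hlim : Tendsto (fun t : ℝ => -t⁻¹ * exp (-t ^ 2 / 2)) atTop (nhds 0) := by
    have hexp : Tendsto (fun t : ℝ => exp (-t ^ 2 / 2)) atTop (nhds 0) :=
      tendsto_exp_atBot.comp <| (tendsto_neg_atBot_iff.mpr
        (tendsto_pow_atTop two_ne_zero)).atBot_div_const two_pos
    simpa using tendsto_inv_atTop_zero.neg.mul hexp
  rw [integral_Ioi_of_hasDerivAt_of_tendsto' hderiv
    (integrableOn_one_add_inv_sq_mul_exp_neg_sq_div_two hx) hlim]
  field_simp
  ring

lemma integral_Ioi_exp_neg_sq_div_two_le {x : ℝ} (hx : 0 < x) :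
    ∫ t in Ioi x, exp (-t ^ 2 / 2) ≤ exp (-x ^ 2 / 2) / x := by
  rw [← integral_Ioi_one_add_inv_sq_mul_exp_neg_sq_div_two hx, ← sub_nonneg,
    ← integral_sub _ integrable_exp_neg_sq_div_two.integrableOn]
  · refine setIntegral_nonneg measurableSet_Ioi fun t _ => ?_
    rw [add_mul, one_mul, add_sub_cancel_left]
    positivity
  · exact integrableOn_one_add_inv_sq_mul_exp_neg_sq_div_two hx

lemma integral_Ioi_inv_sq_mul_exp_neg_sq_div_two_le {x : ℝ} (hx : 0 < x) :
    ∫ t in Ioi x, (t ^ 2)⁻¹ * exp (-t ^ 2 / 2) ≤ (x ^ 2)⁻¹ * (exp (-x ^ 2 / 2) / x) :=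
  calc ∫ t in Ioi x, (t ^ 2)⁻¹ * exp (-t ^ 2 / 2)
      ≤ ∫ t in Ioi x, (x ^ 2)⁻¹ * exp (-t ^ 2 / 2) := by
        refine setIntegral_mono_on (integrableOn_inv_sq_mul_exp_neg_sq_div_two hx)
          (integrable_exp_neg_sq_div_two.const_mul _).integrableOn measurableSet_Ioi
          fun t ht => ?_
        gcongr
        exact ht.le
    _ = (x ^ 2)⁻¹ * ∫ t in Ioi x, exp (-t ^ 2 / 2) := integral_const_mul _ _
    _ ≤ (x ^ 2)⁻¹ * (exp (-x ^ 2 / 2) / x) := by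
        gcongr
        exact integral_Ioi_exp_neg_sq_div_two_le hx

lemma le_integral_Ioi_exp_neg_sq_div_two {x : ℝ} (hx : 0 < x) :
    (1 - (x ^ 2)⁻¹) * exp (-x ^ 2 / 2) / x ≤ ∫ t in Ioi x, exp (-t ^ 2 / 2) := by
  have hsplit := integral_Ioi_one_add_inv_sq_mul_exp_neg_sq_div_two hx
  simp only [add_mul, one_mul] at hsplit
  rw [integral_add integrable_exp_neg_sq_div_two.integrableOn
    (integrableOn_inv_sq_mul_exp_neg_sq_div_two hx)] at hsplit
  have := integral_Ioi_inv_sq_mul_exp_neg_sq_div_two_le hx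
  rw [sub_mul, one_mul, sub_div, mul_div_assoc]
  linarith

lemma log_integral_Ioi_exp_neg_sq_div_two_ratio_le {x ρ : ℝ} (hx : 1 < x) (hρ : 0 ≤ ρ) :
    log ((∫ t in Ioi (x + ρ), exp (-t ^ 2 / 2)) / ∫ t in Ioi x, exp (-t ^ 2 / 2)) ≤
      -log (1 - (x ^ 2)⁻¹) - x * ρ := by
  have hx0 : 0 < x := one_pos.trans hx
  have hxρ : 0 < x + ρ := by linarith
  have hfactor : 0 < 1 - (x ^ 2)⁻¹ :=
    sub_pos.mpr (inv_lt_one_of_one_lt₀ (one_lt_pow₀ hx two_ne_zero))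
  have hupper :
      log (∫ t in Ioi (x + ρ), exp (-t ^ 2 / 2)) ≤ -(x + ρ) ^ 2 / 2 - log (x + ρ) := by
    have := log_le_log (integral_Ioi_exp_neg_sq_div_two_pos _)
      (integral_Ioi_exp_neg_sq_div_two_le hxρ)
    rwa [log_div (exp_pos _).ne' hxρ.ne', log_exp] at this
  have hlower :
      log (1 - (x ^ 2)⁻¹) + -x ^ 2 / 2 - log x ≤ log (∫ t in Ioi x, exp (-t ^ 2 / 2)) := by
    have := log_le_log (by positivity) (le_integral_Ioi_exp_neg_sq_div_two hx0)
    rwa [log_div (by positivity) hx0.ne', log_mul hfactor.ne' (exp_pos _).ne', log_exp] at this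
  have hlog_mono : log x ≤ log (x + ρ) := log_le_log hx0 (by linarith)
  rw [log_div (integral_Ioi_exp_neg_sq_div_two_pos _).ne'
    (integral_Ioi_exp_neg_sq_div_two_pos _).ne']
  nlinarith [sq_nonneg ρ]

theorem rho_ES_upper_bound_general
    (c zα ζ : ℝ)
    (hz1 : 1 < |zα|) (hzc : 2 * c ≤ |zα|)
    (ρstar : ℝ) (hρ0 : 0 ≤ ρstar)
    (hroot : c * ρstar +
      Real.log ((∫ t in Set.Ioi (|zα| + ρstar), Real.exp (-t ^ 2 / 2)) /
        (∫ t in Set.Ioi |zα|, Real.exp (-t ^ 2 / 2))) = Real.log (1 - ζ)) :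
    ρstar ≤ (-Real.log (1 - (zα ^ 2)⁻¹) - Real.log (1 - ζ)) / (|zα| - c) := by
  have hratio := log_integral_Ioi_exp_neg_sq_div_two_ratio_le hz1 hρ0
  rw [sq_abs] at hratio
  rw [le_div_iff₀ (by linarith)]
  linarith

/-- Upper bound on the root `ρ*` of `cρ + ln F_α(|z_α| + ρ) = ln(1-ζ)`:
if `|z_α| > 1` and `|z_α| ≥ 2c`, then
`ρ* ≤ (-ln(1 - z_α⁻²) - ln(1-ζ))/(|z_α| - c)`. -/
theorem rho_ES_upper_bound
    (α c zα ζ : ℝ) (hα0 : 0 < α) (hα1 : α < 1 / 2) (hc : 0 ≤ c)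
    (hz : ∫ t in Set.Iic zα, Real.exp (-t ^ 2 / 2) = α * Real.sqrt (2 * Real.pi))
    (hz1 : 1 < |zα|) (hzc : 2 * c ≤ |zα|)
    (hζ0 : 0 < ζ) (hζ1 : ζ < 1)
    (ρstar : ℝ) (hρ0 : 0 ≤ ρstar)
    (hroot : c * ρstar +
      Real.log ((∫ t in Set.Ioi (|zα| + ρstar), Real.exp (-t ^ 2 / 2)) /
        (∫ t in Set.Ioi |zα|, Real.exp (-t ^ 2 / 2))) = Real.log (1 - ζ)) :
    ρstar ≤ (-Real.log (1 - (zα ^ 2)⁻¹) - Real.log (1 - ζ)) / (|zα| - c) :=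
  rho_ES_upper_bound_general c zα ζ hz1 hzc ρstar hρ0 hroot
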